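/- arXiv:1802.09410 — 8 statements merged into one kernel-verified Lean document; each statement's English description precedes it below -/
import Mathlib

section
/- For all integers D ≥ 1, n ≥ 1, k, and i, the integer n!/gcd(D^n, n!) divides the product ∏_{j=k}^{n+k-1} (D·j + i). -/
open Finset

lemma ascProd (m : ℕ) : ∀ n : ℕ, m.ascFactorial n = ∏ j ∈ Finset.range n, (m + j)
  | 0 => by simp
  | n + 1 => by
      rw [Finset.prod_range_succ, ← ascProd m n, Nat.ascFactorial_succ, mul_comm]

lemma lemA (m : ℤ) (n : ℕ) : (n.factorial : ℤ) ∣ ∏ j ∈ Finset.range n, (m + j) := by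
  rcases le_or_gt 0 m with hm | hm
  · lift m to ℕ using hm
    have h1 : (n.factorial : ℤ) ∣ (m.ascFactorial n : ℤ) :=
      Int.natCast_dvd_natCast.mpr (Nat.factorial_dvd_ascFactorial m n)
    have h2 : ((m.ascFactorial n : ℕ) : ℤ) = ∏ j ∈ Finset.range n, ((m : ℤ) + j) := by
      rw [ascProd]
      push_cast
      rfl
    rwa [h2] at h1
  · rcases le_or_gt (m + n) 0 with h | h
    · set b := (-m).toNat with hbdef
      have hb : (b : ℤ) = -m := Int.toNat_of_nonneg (by omega)
      have hnb : n ≤ b := by omega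
      have key : ∏ j ∈ Finset.range n, (m + (j:ℤ)) = (-1)^n * ((b.descFactorial n : ℕ) : ℤ) := by
        rw [Nat.descFactorial_eq_prod_range]
        push_cast
        rw [Finset.prod_congr rfl (fun j hj => by
          have hj' : j < n := Finset.mem_range.mp hj
          have hcast : ((b - j : ℕ) : ℤ) = (b : ℤ) - j := by
            rw [Int.ofNat_sub (by omega)]
          show m + (j:ℤ) = (-1) * (((b - j : ℕ) : ℤ))
          rw [hcast]; omega)]
        rw [Finset.prod_mul_distrib, Finset.prod_const, Finset.card_range]
      rw [key]
      exact Dvd.dvd.mul_left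
        (Int.natCast_dvd_natCast.mpr (Nat.factorial_dvd_descFactorial b n)) _
    · have hmem : (-m).toNat ∈ Finset.range n := by
        rw [Finset.mem_range]; omega
      rw [Finset.prod_eq_zero hmem (by
        have : (((-m).toNat : ℤ)) = -m := Int.toNat_of_nonneg (by omega)
        omega)]
      exact dvd_zero _

theorem stmt0 (D n : ℕ) (hD : 1 ≤ D) (hn : 1 ≤ n) (k i : ℤ) :
    ((n.factorial / Nat.gcd (D ^ n) n.factorial : ℕ) : ℤ) ∣
      ∏ j ∈ Finset.range n, ((D : ℤ) * (k + j) + i) := by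
  set P : ℤ := ∏ j ∈ Finset.range n, ((D : ℤ) * (k + j) + i) with hP
  have key : (n.factorial : ℤ) ∣ (D : ℤ)^n * P := by
    rw [Int.natCast_dvd, Nat.dvd_iff_prime_pow_dvd_dvd]
    intro p a hp hpa
    rw [← Int.natCast_dvd]
    by_cases hpD : p ∣ D
    · have ha : a ≤ n := by
        have h1 := (Nat.Prime.pow_dvd_factorial_iff hp
          (Nat.lt_succ_self (Nat.log p n))).mp hpa
        calc a ≤ ∑ i ∈ Finset.Ico 1 (Nat.log p n + 1), n / p ^ i := h1
          _ ≤ n / (p - 1) := Nat.geom_sum_Ico_le hp.two_le _ _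
          _ ≤ n := Nat.div_le_self _ _
      have hdvd : ((p^a : ℕ) : ℤ) ∣ (D : ℤ)^n := by
        push_cast
        exact dvd_trans (pow_dvd_pow _ ha)
          (pow_dvd_pow_of_dvd (Int.natCast_dvd_natCast.mpr hpD) n)
      exact hdvd.mul_right _
    · set M : ℕ := p ^ a with hM
      haveI : NeZero M := ⟨pow_ne_zero _ hp.pos.ne'⟩
      have hcop : Nat.Coprime D M :=
        Nat.Coprime.pow_right a ((hp.coprime_iff_not_dvd.mpr hpD).symm)
      have hic : IsCoprime (D : ℤ) (M : ℤ) := Nat.isCoprime_iff_coprime.mpr hcop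
      obtain ⟨c, d, hcd⟩ := hic
      have hMP : (M : ℤ) ∣ P := by
        rw [← ZMod.intCast_zmod_eq_zero_iff_dvd]
        have hDc : (D : ZMod M) * (c : ZMod M) = 1 := by
          have h := congrArg (Int.cast : ℤ → ZMod M) hcd
          push_cast at h
          rw [ZMod.natCast_self] at h
          rw [← h]; ring
        have hterm : ∀ j ∈ Finset.range n,
            ((D : ZMod M) * ((k : ZMod M) + (j : ℕ)) + (i : ZMod M))
            = (D : ZMod M) * (((k : ZMod M) + (c : ZMod M) * (i : ZMod M)) + (j : ℕ)) := by
          intro j _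
          linear_combination (-(i : ZMod M)) * hDc
        have hPcast : ((P : ℤ) : ZMod M)
            = (D : ZMod M)^n * (((∏ j ∈ Finset.range n, ((k + c * i) + (j:ℤ))) : ℤ) : ZMod M) := by
          rw [hP]
          push_cast
          rw [Finset.prod_congr rfl hterm, Finset.prod_mul_distrib, Finset.prod_const,
            Finset.card_range]
        obtain ⟨t, ht⟩ := lemA (k + c * i) n
        rw [hPcast, ht]
        push_cast
        have hz : ((n.factorial : ℕ) : ZMod M) = 0 :=
          (ZMod.natCast_eq_zero_iff _ _).mpr hpa
        rw [hz]
        ring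
      exact hMP.mul_left _
  set g := Nat.gcd (D ^ n) n.factorial with hg
  have hgpos : 0 < g := Nat.gcd_pos_of_pos_right _ n.factorial_pos
  have h1 : n.factorial = g * (n.factorial / g) :=
    (Nat.mul_div_cancel' (Nat.gcd_dvd_right _ _)).symm
  have h2 : D ^ n = g * (D ^ n / g) :=
    (Nat.mul_div_cancel' (Nat.gcd_dvd_left _ _)).symm
  have hcop : Nat.Coprime (D ^ n / g) (n.factorial / g) := Nat.coprime_div_gcd_div_gcd hgpos
  have key2 : ((n.factorial / g : ℕ) : ℤ) ∣ ((D ^ n / g : ℕ) : ℤ) * P := by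
    have hgz : ((g : ℕ) : ℤ) ≠ 0 := by exact_mod_cast hgpos.ne'
    apply (mul_dvd_mul_iff_left hgz).mp
    have e1 : (g : ℤ) * ((n.factorial / g : ℕ) : ℤ) = (n.factorial : ℤ) := by
      exact_mod_cast congrArg (Nat.cast : ℕ → ℤ) h1.symm
    have e2 : (g : ℤ) * ((D ^ n / g : ℕ) : ℤ) = ((D ^ n : ℕ) : ℤ) := by
      exact_mod_cast congrArg (Nat.cast : ℕ → ℤ) h2.symm
    rw [e1, ← mul_assoc, e2, Nat.cast_pow]
    exact key
  exact ((Nat.isCoprime_iff_coprime.mpr hcop).symm).dvd_of_dvd_mul_left key2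
end

section
/- For every integer n ≥ 0 and all t not in {0, -1, ..., -n}, one has ∏_{j=1}^n (t−j) / ∏_{j=0}^n (t+j) = ∑_{k=0}^n (-1)^{n+k} · C(n+k, n) · C(n,k) / (t+k). -/
open Polynomial Finset

private noncomputable def Pp (n : ℕ) : ℚ[X] := ∏ j ∈ Icc 1 n, (X - C (j : ℚ))
private noncomputable def Qq (n k : ℕ) : ℚ[X] :=
  ∏ j ∈ (range (n + 1)).erase k, (X + C (j : ℚ))
private def cf (n k : ℕ) : ℚ := (-1) ^ (n + k) * ((n + k).choose n : ℚ) * (n.choose k : ℚ)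
private noncomputable def Rr (n : ℕ) : ℚ[X] := ∑ k ∈ range (n + 1), C (cf n k) * Qq n k

private lemma fac_cast (k : ℕ) : ∏ j ∈ range k, ((j : ℚ) + 1) = (k.factorial : ℚ) := by
  rw [← Finset.prod_range_add_one_eq_factorial k]
  push_cast
  rfl

private lemma prodA (n k : ℕ) :
    ∏ j ∈ Icc 1 n, ((k : ℚ) + j) = ((n + k).descFactorial n : ℚ) := by
  induction n with
  | zero => simp
  | succ n ih =>
    rw [Finset.prod_Icc_succ_top (Nat.le_add_left 1 n), ih,
      show n + 1 + k = n + k + 1 from by omega, Nat.succ_descFactorial_succ]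
    push_cast
    ring

private lemma prodC (k : ℕ) :
    ∏ j ∈ range k, ((j : ℚ) - k) = (-1) ^ k * (k.factorial : ℚ) := by
  rw [← Finset.prod_range_reflect]
  have h : ∀ j ∈ range k, ((k - 1 - j : ℕ) : ℚ) - k = (-1) * ((j : ℚ) + 1) := by
    intro j hj
    rw [mem_range] at hj
    have h1 : (k - 1 - j : ℕ) = k - (j + 1) := by omega
    rw [h1, Nat.cast_sub (by omega)]
    push_cast
    ring
  rw [Finset.prod_congr rfl h, Finset.prod_mul_distrib, Finset.prod_const, card_range, fac_cast]

private lemma prodD (n k : ℕ) (hk : k ≤ n) :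
    ∏ j ∈ Icc (k + 1) n, ((j : ℚ) - k) = ((n - k).factorial : ℚ) := by
  rw [← Finset.Ico_add_one_right_eq_Icc, Finset.prod_Ico_eq_prod_range,
    show n + 1 - (k + 1) = n - k from by omega, ← fac_cast (n - k)]
  apply Finset.prod_congr rfl
  intro i _
  push_cast
  ring

private lemma prodB (n k : ℕ) (hk : k ≤ n) :
    ∏ j ∈ (range (n + 1)).erase k, ((j : ℚ) - k) =
      (-1) ^ k * (k.factorial : ℚ) * ((n - k).factorial : ℚ) := by
  have hset : (range (n + 1)).erase k = range k ∪ Icc (k + 1) n := by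
    ext j
    simp only [mem_erase, mem_range, mem_union, mem_Icc]
    omega
  have hdisj : Disjoint (range k) (Icc (k + 1) n) := by
    rw [Finset.disjoint_left]
    intro j hj hj'
    simp only [mem_range] at hj
    simp only [mem_Icc] at hj'
    omega
  rw [hset, Finset.prod_union hdisj, prodC, prodD n k hk]

private lemma key_nat (n k : ℕ) (hk : k ≤ n) :
    (n + k).choose n * (n.choose k * (k.factorial * (n - k).factorial)) =
      (n + k).descFactorial n := by
  calc (n + k).choose n * (n.choose k * (k.factorial * (n - k).factorial))
      = n.choose k * k.factorial * (n - k).factorial * (n + k).choose n := by ring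
    _ = n.factorial * (n + k).choose n := by rw [Nat.choose_mul_factorial_mul_factorial hk]
    _ = (n + k).descFactorial n := (Nat.descFactorial_eq_factorial_mul_choose (n + k) n).symm

private lemma key_eval (n k : ℕ) (hk : k ≤ n) :
    ∏ j ∈ Icc 1 n, (-(k : ℚ) - j) =
      cf n k * ∏ j ∈ (range (n + 1)).erase k, (-(k : ℚ) + j) := by
  have hL : ∏ j ∈ Icc 1 n, (-(k : ℚ) - j) = (-1) ^ n * ((n + k).descFactorial n : ℚ) := by
    calc ∏ j ∈ Icc 1 n, (-(k : ℚ) - j) = ∏ j ∈ Icc 1 n, (-1) * ((k : ℚ) + j) := by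
          apply Finset.prod_congr rfl; intro j _; ring
      _ = (-1) ^ n * ((n + k).descFactorial n : ℚ) := by
          rw [Finset.prod_mul_distrib, Finset.prod_const, Nat.card_Icc,
            Nat.add_sub_cancel, prodA]
  have hR : ∏ j ∈ (range (n + 1)).erase k, (-(k : ℚ) + j) =
      (-1) ^ k * (k.factorial : ℚ) * ((n - k).factorial : ℚ) := by
    rw [← prodB n k hk]
    apply Finset.prod_congr rfl
    intro j _; ring
  have hq : ((n + k).choose n : ℚ) *
      ((n.choose k : ℚ) * ((k.factorial : ℚ) * ((n - k).factorial : ℚ)))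
      = ((n + k).descFactorial n : ℚ) := by exact_mod_cast key_nat n k hk
  have hsq : ((-1 : ℚ)) ^ k * (-1) ^ k = 1 := by
    rw [← pow_add]; exact Even.neg_one_pow ⟨k, rfl⟩
  rw [hL, hR, cf, ← hq, pow_add]
  linear_combination (-((-1 : ℚ) ^ n * ((n + k).choose n : ℚ) * (n.choose k : ℚ) *
    (k.factorial : ℚ) * ((n - k).factorial : ℚ))) * hsq

private lemma deg_lt (n : ℕ) (f : ℚ[X]) (h : f.natDegree ≤ n) :
    f.degree < ((n + 1 : ℕ) : WithBot ℕ) :=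
  lt_of_le_of_lt f.degree_le_natDegree (by exact_mod_cast Nat.lt_succ_of_le h)

private lemma poly_eq (n : ℕ) : Pp n = Rr n := by
  have hinj : Function.Injective (fun k : ℕ => -(k : ℚ)) :=
    fun a b h => Nat.cast_injective (neg_injective h)
  set s : Finset ℚ := (range (n + 1)).image (fun k : ℕ => -(k : ℚ)) with hs
  have hcard : s.card = n + 1 := by
    rw [hs, Finset.card_image_of_injective _ hinj, card_range]
  apply Polynomial.eq_of_degrees_lt_of_eval_finset_eq s
  · rw [hcard]
    apply deg_lt
    refine le_trans (Polynomial.natDegree_prod_le _ _) (le_of_eq ?_)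
    have h1 : ∑ i ∈ Icc 1 n, (X - C (i : ℚ)).natDegree = ∑ i ∈ Icc 1 n, 1 :=
      Finset.sum_congr rfl fun j _ => natDegree_X_sub_C (j : ℚ)
    rw [h1, Finset.sum_const, Nat.card_Icc, smul_eq_mul, Nat.mul_one, Nat.add_sub_cancel]
  · rw [hcard]
    apply deg_lt
    apply Polynomial.natDegree_sum_le_of_forall_le
    intro k hk
    refine le_trans (Polynomial.natDegree_mul_le) ?_
    rw [natDegree_C, Nat.zero_add]
    refine le_trans (Polynomial.natDegree_prod_le _ _) (le_of_eq ?_)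
    have h1 : ∑ i ∈ (range (n + 1)).erase k, (X + C (i : ℚ)).natDegree =
        ∑ i ∈ (range (n + 1)).erase k, 1 :=
      Finset.sum_congr rfl fun j _ => natDegree_X_add_C (j : ℚ)
    rw [h1, Finset.sum_const, Finset.card_erase_of_mem hk, card_range, smul_eq_mul,
      Nat.mul_one, Nat.add_sub_cancel]
  · intro x hx
    rw [hs, Finset.mem_image] at hx
    obtain ⟨k, hk, rfl⟩ := hx
    rw [mem_range, Nat.lt_succ_iff] at hk
    have hP : (Pp n).eval (-(k : ℚ)) = ∏ j ∈ Icc 1 n, (-(k : ℚ) - j) := by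
      rw [Pp, eval_prod]; simp
    have hQ : ∀ m, (Qq n m).eval (-(k : ℚ)) =
        ∏ j ∈ (range (n + 1)).erase m, (-(k : ℚ) + j) := by
      intro m; rw [Qq, eval_prod]; simp
    rw [hP, Rr, eval_finset_sum, Finset.sum_eq_single k]
    · rw [eval_mul, eval_C, hQ, key_eval n k hk]
    · intro m hm hmk
      rw [eval_mul, eval_C, hQ]
      rw [Finset.prod_eq_zero (i := k) (by
        rw [mem_erase]; exact ⟨Ne.symm hmk, mem_range.2 (Nat.lt_succ_of_le hk)⟩) (by ring)]
      ring
    · intro h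
      exact absurd (mem_range.2 (Nat.lt_succ_of_le hk)) h

theorem stmt6 (n : ℕ) (t : ℚ) (ht : ∀ j ≤ n, t + (j : ℚ) ≠ 0) :
    (∏ j ∈ Finset.Icc 1 n, (t - j)) / ∏ j ∈ Finset.range (n + 1), (t + j) =
      ∑ k ∈ Finset.range (n + 1),
        (-1) ^ (n + k) * ((n + k).choose n : ℚ) * (n.choose k : ℚ) / (t + k) := by
  set D : ℚ := ∏ j ∈ range (n + 1), (t + j) with hD
  have hQeval : ∀ k, (Qq n k).eval t = ∏ j ∈ (range (n + 1)).erase k, (t + j) := by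
    intro k; rw [Qq, eval_prod]; simp
  have hfac : ∀ k ∈ range (n + 1), D = (t + k) * (Qq n k).eval t := by
    intro k hk
    rw [hQeval, hD]
    exact (Finset.mul_prod_erase (range (n + 1)) (fun j => t + (j : ℚ)) hk).symm
  have hQne : ∀ k ∈ range (n + 1), (Qq n k).eval t ≠ 0 := by
    intro k hk
    rw [hQeval]
    apply Finset.prod_ne_zero_iff.2
    intro j hj
    exact ht j (Nat.lt_succ_iff.1 (mem_range.1 (mem_of_mem_erase hj)))
  have hP : ∏ j ∈ Icc 1 n, (t - j) = (Pp n).eval t := by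
    rw [Pp, eval_prod]; simp
  have hsum : ∀ k ∈ range (n + 1),
      (-1 : ℚ) ^ (n + k) * ((n + k).choose n : ℚ) * (n.choose k : ℚ) / (t + k) =
        cf n k * (Qq n k).eval t / D := by
    intro k hk
    rw [hfac k hk, cf, mul_div_assoc, mul_div_mul_right _ _ (hQne k hk), mul_div_assoc]
  rw [hP, Finset.sum_congr rfl hsum, ← Finset.sum_div]
  congr 1
  rw [poly_eq, Rr, eval_finset_sum]
  apply Finset.sum_congr rfl
  intro k _
  rw [eval_mul, eval_C]
end

section
/- For every integer n ≥ 0 and all t not in {0, -1, ..., -n}, one has ∏_{j=1}^n (t+n+j) / ∏_{j=0}^n (t+j) = ∑_{k=0}^n (-1)^k · C(2n−k, n) · C(n,k) / (t+k). -/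
open Finset Polynomial

lemma L2 (m : ℕ) : ∏ j ∈ range m, ((j : ℚ) - m) = (-1) ^ m * m.factorial := by
  have h : ∀ j ∈ range m, ((j : ℚ) - m) = (-1) * (((m - 1 - j : ℕ) : ℚ) + 1) := by
    intro j hj
    simp only [mem_range] at hj
    push_cast [Nat.cast_sub (by omega : j ≤ m - 1), Nat.cast_sub (by omega : 1 ≤ m)]
    ring
  rw [Finset.prod_congr rfl h, Finset.prod_mul_distrib, Finset.prod_const, Finset.card_range]
  congr 1
  rw [Finset.prod_range_reflect (fun j => ((j:ℚ) + 1)) m]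
  norm_cast
  exact Finset.prod_range_add_one_eq_factorial m

lemma L3 {m n : ℕ} (hm : m ≤ n) :
    ∏ j ∈ Ico (m+1) (n+1), ((j : ℚ) - m) = (n - m).factorial := by
  rw [Finset.prod_Ico_eq_prod_range]
  have h : ∀ i ∈ range (n + 1 - (m+1)), ((m + 1 + i : ℕ) : ℚ) - m = ((i:ℚ) + 1) := by
    intro i _; push_cast; ring
  rw [Finset.prod_congr rfl h]
  have : n + 1 - (m + 1) = n - m := by omega
  rw [this]
  norm_cast
  exact Finset.prod_range_add_one_eq_factorial _

lemma L4 {m n : ℕ} (hm : m < n + 1) (f : ℕ → ℚ) :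
    ∏ j ∈ (range (n+1)).erase m, f j = (∏ j ∈ range m, f j) * ∏ j ∈ Ico (m+1) (n+1), f j := by
  rw [← Finset.prod_union]
  · congr 1
    ext j
    simp only [mem_erase, mem_range, mem_union, mem_Ico]
    omega
  · rw [Finset.disjoint_left]
    intro j hj hj'
    simp only [mem_range] at hj
    simp only [mem_Ico] at hj'
    omega

lemma L1 (a : ℕ) : ∀ b : ℕ, (∏ j ∈ Icc 1 b, (a + j)) * a.factorial = (a + b).factorial := by
  intro b
  induction b with
  | zero => simp
  | succ b ih =>
    rw [Finset.prod_Icc_succ_top (Nat.le_add_left 1 b), mul_comm _ (a + (b+1)), mul_assoc, ih,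
      ← Nat.add_assoc, Nat.factorial_succ]

lemma L6 {m n : ℕ} (hm : m ≤ n) :
    ((2*n - m).choose n) * (n.choose m) * (m.factorial * ((n-m).factorial * (n-m).factorial)) =
      (2*n - m).factorial := by
  have h1 := Nat.choose_mul_factorial_mul_factorial hm
  have h2 := Nat.choose_mul_factorial_mul_factorial (show n ≤ 2*n - m by omega)
  have h3 : 2*n - m - n = n - m := by omega
  rw [h3] at h2
  calc ((2*n - m).choose n) * (n.choose m) * (m.factorial * ((n-m).factorial * (n-m).factorial))
      = (2*n-m).choose n * (n.choose m * m.factorial * (n-m).factorial) * (n-m).factorial := by ring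
    _ = (2*n-m).factorial := by rw [h1, h2]

lemma L7 {m n : ℕ} (hm : m < n + 1) :
    ∏ j ∈ (range (n+1)).erase m, (-(m:ℚ) + j) = (-1)^m * m.factorial * (n-m).factorial := by
  have h : ∀ j ∈ (range (n+1)).erase m, (-(m:ℚ) + j) = ((j:ℚ) - m) := by
    intro j _; ring
  rw [Finset.prod_congr rfl h, L4 hm, L2, L3 (by omega)]

lemma L8 {m n : ℕ} (hm : m < n + 1) :
    ∏ j ∈ Icc 1 n, (-(m:ℚ) + ((n:ℚ) + j)) = ((2*n - m).factorial : ℚ) / ((n-m).factorial : ℚ) := by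
  have h : ∀ j ∈ Icc 1 n, (-(m:ℚ) + ((n:ℚ) + j)) = (((n - m + j : ℕ)) : ℚ) := by
    intro j _
    push_cast [Nat.cast_sub (by omega : m ≤ n)]
    ring
  rw [Finset.prod_congr rfl h, ← Nat.cast_prod, eq_div_iff (by positivity), ← Nat.cast_mul,
    L1 (n - m) n]
  congr 2
  omega

lemma key (n : ℕ) (t : ℚ) :
    (∑ k ∈ range (n+1), ((-1)^k * ((2*n-k).choose n : ℚ) * (n.choose k : ℚ)) *
        ∏ j ∈ (range (n+1)).erase k, (t + j))
      = ∏ j ∈ Icc 1 n, (t + ((n:ℚ) + j)) := by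
  set f : Polynomial ℚ := ∏ j ∈ Icc 1 n, (X + C ((n:ℚ) + j)) with hf
  set g : Polynomial ℚ := ∑ k ∈ range (n+1),
      C ((-1)^k * ((2*n-k).choose n : ℚ) * (n.choose k : ℚ)) *
        ∏ j ∈ (range (n+1)).erase k, (X + C ((j:ℚ))) with hg
  have hinj : Function.Injective (fun m : ℕ => -(m : ℚ)) := by
    intro a b hab
    simpa using hab
  have hcard : ((range (n+1)).image (fun m : ℕ => -(m : ℚ))).card = n + 1 := by
    rw [Finset.card_image_of_injective _ hinj, Finset.card_range]
  have hdf : f.degree ≤ (n : ℕ) := by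
    calc f.degree ≤ (f.natDegree : WithBot ℕ) := Polynomial.degree_le_natDegree
    _ ≤ (n : ℕ) := by
        rw [hf, Polynomial.natDegree_prod _ _ (fun j _ => Polynomial.X_add_C_ne_zero _)]
        have h1 : ∑ j ∈ Icc 1 n, (X + C ((n:ℚ) + (j:ℚ))).natDegree = n := by
          rw [Finset.sum_congr rfl fun j _ => Polynomial.natDegree_X_add_C _]
          simp [Nat.card_Icc]
        rw [h1]
  have hdg : g.degree ≤ (n : ℕ) := by
    refine le_trans (Polynomial.degree_sum_le _ _) ?_
    refine Finset.sup_le fun k hk => ?_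
    refine le_trans (Polynomial.degree_mul_le _ _) ?_
    rw [show ((n:ℕ) : WithBot ℕ) = 0 + (n:ℕ) from (zero_add _).symm]
    refine add_le_add Polynomial.degree_C_le ?_
    calc (∏ j ∈ (range (n+1)).erase k, (X + C ((j:ℚ)))).degree
        ≤ ((∏ j ∈ (range (n+1)).erase k, (X + C ((j:ℚ)))).natDegree : WithBot ℕ) :=
          Polynomial.degree_le_natDegree
      _ ≤ (n : ℕ) := by
          rw [Polynomial.natDegree_prod _ _ (fun j _ => Polynomial.X_add_C_ne_zero _)]
          simp only [Polynomial.natDegree_X_add_C, Finset.sum_const, smul_eq_mul, mul_one]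
          rw [Finset.card_erase_of_mem hk, Finset.card_range]
          exact_mod_cast le_refl _
  have hfg : f = g := by
    apply Polynomial.eq_of_degree_sub_lt_of_eval_finset_eq
      ((range (n+1)).image (fun m : ℕ => -(m : ℚ)))
    · rw [hcard]
      calc (f - g).degree ≤ max f.degree g.degree := Polynomial.degree_sub_le _ _
        _ ≤ (n : ℕ) := max_le hdf hdg
        _ < ((n+1 : ℕ) : WithBot ℕ) := by exact_mod_cast Nat.lt_succ_self n
    · intro x hx
      obtain ⟨m, hm, rfl⟩ := Finset.mem_image.mp hx
      rw [Finset.mem_range] at hm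
      rw [hf, hg, Polynomial.eval_prod, Polynomial.eval_finset_sum]
      simp only [Polynomial.eval_mul, Polynomial.eval_prod, Polynomial.eval_add,
        Polynomial.eval_X, Polynomial.eval_C]
      rw [Finset.sum_eq_single m]
      · rw [L7 hm, L8 hm]
        have hne : ((n-m).factorial : ℚ) ≠ 0 := by positivity
        have := L6 (show m ≤ n by omega)
        rw [div_eq_iff hne]
        symm
        calc (-1:ℚ)^m * ((2*n-m).choose n : ℚ) * (n.choose m : ℚ) *
              ((-1)^m * m.factorial * (n-m).factorial) * (n-m).factorial
            = ((-1)^m * (-1)^m) * (((2*n-m).choose n : ℚ) * (n.choose m) *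
                (m.factorial * ((n-m).factorial * (n-m).factorial))) := by ring
          _ = ((2*n - m).factorial : ℚ) := by
              rw [← pow_add, Even.neg_one_pow ⟨m, by ring⟩, one_mul]
              exact_mod_cast congrArg (Nat.cast (R := ℚ)) this
      · intro k hk hkm
        apply mul_eq_zero_of_right
        apply Finset.prod_eq_zero (i := m)
        · exact Finset.mem_erase.mpr ⟨fun h => hkm h.symm, Finset.mem_range.mpr hm⟩
        · simp
      · intro h
        exact absurd (Finset.mem_range.mpr hm) h
  have := congrArg (Polynomial.eval t) hfg
  rw [hf, hg] at this
  simp only [Polynomial.eval_prod, Polynomial.eval_finset_sum, Polynomial.eval_mul,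
    Polynomial.eval_add, Polynomial.eval_X, Polynomial.eval_C] at this
  exact this.symm

theorem stmt7 (n : ℕ) (t : ℚ) (ht : ∀ j ≤ n, t + (j : ℚ) ≠ 0) :
    (∏ j ∈ Finset.Icc 1 n, (t + n + j)) / ∏ j ∈ Finset.range (n + 1), (t + j) =
      ∑ k ∈ Finset.range (n + 1),
        (-1) ^ k * ((2 * n - k).choose n : ℚ) * (n.choose k : ℚ) / (t + k) := by
  have hden : ∀ j ∈ range (n+1), t + (j:ℚ) ≠ 0 := fun j hj =>
    ht j (Nat.lt_succ_iff.mp (mem_range.mp hj))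
  have h0 : (∏ j ∈ range (n+1), (t + (j:ℚ))) ≠ 0 := Finset.prod_ne_zero_iff.mpr hden
  have hterm : ∀ k ∈ range (n+1),
      (-1) ^ k * ((2 * n - k).choose n : ℚ) * (n.choose k : ℚ) / (t + k) =
        (((-1) ^ k * ((2 * n - k).choose n : ℚ) * (n.choose k : ℚ)) *
          ∏ j ∈ (range (n+1)).erase k, (t + j)) / ∏ j ∈ range (n+1), (t + (j:ℚ)) := by
    intro k hk
    rw [div_eq_div_iff (hden k hk) h0, ← Finset.mul_prod_erase _ _ hk]
    ring
  rw [Finset.sum_congr rfl hterm, ← Finset.sum_div, key n t]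
  congr 1
  exact Finset.prod_congr rfl fun j _ => by ring
end

section
/- Let D ≥ 1, n ≥ 0 be integers and i an integer. Then for each k in {0,...,n}, the rational number (-1)^{n+k} · (∏_{j=k+1}^{n+k} (D·j − i)) / (n!/gcd(D^n, n!)) · C(n,k) · D^n/gcd(D^n, n!) is an integer, and D^{2n} · ∏_{j=1}^n (t − j + i/D) / ∏_{j=0}^n (t+j) = ∑_{k=0}^n [that integer] / (t+k) as rational functions in t. -/
/-!
Both sides are rational functions of `t` with numerator of degree at most `n` over the simple
poles `t = -k`, so the identity is Lagrange interpolation at the nodes `0, -1, …, -n`: the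
numerator takes the value `(-1)^n D^n ∏_{j=k+1}^{n+k} (D j - i)` at `t = -k`, and the nodal
weight there is `(-1)^k / (k! (n-k)!)`.

For integrality write `n! = g M` with `g = gcd(D^n, n!)`. Then `g ∣ D^n`, and `M` is coprime to
`D` since `v_p(n!) ≤ n ≤ v_p(D^n)` for every prime `p ∣ D`. Modulo `M` the factor `D` is
invertible, so `∏ (D j - i) ≡ D^n ∏ (j - D⁻¹ i)`, a product of `n` consecutive integers, which
`n!`, hence `M`, divides.
-/

open Finset Nat Polynomial

theorem Finset.prod_Icc_eq_prod_range_sub {M : Type*} [CommMonoid M] (g : ℕ → M) (n k : ℕ) :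
    ∏ j ∈ Icc (k + 1) (n + k), g j = ∏ m ∈ range n, g (n + k - m) := by
  induction n with
  | zero => simp
  | succ n ih =>
    rw [Nat.add_right_comm, prod_Icc_succ_top (by omega), ih, prod_range_succ', Nat.sub_zero]
    congr 1
    exact prod_congr rfl fun m _ => congrArg g (by omega)

theorem Int.factorial_dvd_prod_Icc_add (n k : ℕ) (c : ℤ) :
    (n ! : ℤ) ∣ ∏ j ∈ Icc (k + 1) (n + k), ((j : ℤ) + c) := by
  have h : ∏ j ∈ Icc (k + 1) (n + k), ((j : ℤ) + c) = (descPochhammer ℤ n).eval (n + k + c) := by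
    rw [prod_Icc_eq_prod_range_sub, descPochhammer_eval_eq_prod_range]
    refine prod_congr rfl fun m hm => ?_
    rw [Nat.cast_sub (by simp at hm; omega)]
    push_cast
    ring
  rw [h, eval_eq_smeval, Ring.descPochhammer_eq_factorial_smul_choose, nsmul_eq_mul]
  exact dvd_mul_right _ _

theorem Nat.coprime_factorial_div_gcd_pow (D n : ℕ) : Coprime D (n ! / gcd (D ^ n) n !) := by
  refine Nat.coprime_of_dvd fun p hp hpD hpM => ?_
  have hle : (n !).factorization p ≤ n :=
    (factorization_factorial_le_div_pred hp n).trans (Nat.div_le_self _ _)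
  have hv : p ^ (n !).factorization p ∣ gcd (D ^ n) n ! :=
    Nat.dvd_gcd ((pow_dvd_pow p hle).trans (pow_dvd_pow_of_dvd hpD n)) (ordProj_dvd _ _)
  have h := mul_dvd_mul hv hpM
  rw [← pow_succ, Nat.mul_div_cancel' (Nat.gcd_dvd_right _ _)] at h
  exact pow_succ_factorization_not_dvd (factorial_ne_zero n) hp h

theorem Int.dvd_prod_mul_add_of_isCoprime {ι : Type*} (s : Finset ι) (f : ι → ℤ) {D M : ℤ}
    (hDM : IsCoprime D M) (hM : ∀ c, M ∣ ∏ j ∈ s, (f j + c)) (b : ℤ) :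
    M ∣ ∏ j ∈ s, (D * f j + b) := by
  obtain ⟨u, v, huv⟩ := hDM
  have hmod : ∏ j ∈ s, (D * f j + b) ≡ D ^ #s * ∏ j ∈ s, (f j + u * b) [ZMOD M] := by
    rw [← prod_const, ← prod_mul_distrib]
    refine Int.ModEq.prod fun j _ => (Int.modEq_iff_dvd.mpr ⟨-(v * b), ?_⟩)
    linear_combination b * huv
  exact (Int.ModEq.dvd_iff hmod).mpr ((hM _).mul_left _)

theorem Int.factorial_dvd_pow_mul_prod_Icc (D n k : ℕ) (i : ℤ) :
    (n ! : ℤ) ∣ D ^ n * ∏ j ∈ Icc (k + 1) (n + k), ((D : ℤ) * j - i) := by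
  have hM : ((n ! / Nat.gcd (D ^ n) n ! : ℕ) : ℤ) ∣ n ! := by
    exact_mod_cast Nat.div_dvd_of_dvd (Nat.gcd_dvd_right _ _)
  have hP : ((n ! / Nat.gcd (D ^ n) n ! : ℕ) : ℤ) ∣
      ∏ j ∈ Icc (k + 1) (n + k), ((D : ℤ) * j + -i) :=
    dvd_prod_mul_add_of_isCoprime _ _
      (Nat.isCoprime_iff_coprime.mpr (coprime_factorial_div_gcd_pow D n))
      (fun c => hM.trans (factorial_dvd_prod_Icc_add n k c)) _
  simp_rw [← sub_eq_add_neg] at hP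
  have h := mul_dvd_mul (Int.natCast_dvd_natCast.mpr (Nat.gcd_dvd_left (D ^ n) n !)) hP
  rwa [← Nat.cast_mul, Nat.mul_div_cancel' (Nat.gcd_dvd_right _ _), Nat.cast_pow] at h

theorem Lagrange.eval_div_prod_sub_eq_sum {F ι : Type*} [Field F] [DecidableEq ι] {s : Finset ι}
    {v : ι → F} (hvs : Set.InjOn v s) {f : F[X]} (hf : f.degree < #s) {t : F}
    (ht : ∀ i ∈ s, t ≠ v i) :
    f.eval t / ∏ i ∈ s, (t - v i) = ∑ i ∈ s, nodalWeight s v i * f.eval (v i) / (t - v i) := by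
  have hne : ∏ i ∈ s, (t - v i) ≠ 0 := prod_ne_zero_iff.mpr fun i hi => sub_ne_zero.mpr (ht i hi)
  conv_lhs => rw [eq_interpolate hvs hf]
  rw [eval_interpolate_not_at_node _ ht, eval_nodal, mul_div_cancel_left₀ _ hne]
  exact sum_congr rfl fun i _ => by ring

theorem prod_range_erase_natCast_sub {K : Type*} [Field K] {n k : ℕ} (hk : k ≤ n) :
    ∏ j ∈ (range (n + 1)).erase k, ((j : K) - k) = (-1) ^ k * k ! * (n - k)! := by
  induction n, hk using Nat.le_induction with
  | base =>
    rw [range_add_one, erase_insert notMem_range_self, Nat.sub_self, factorial_zero,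
      Nat.cast_one, mul_one, ← prod_range_reflect, ← prod_range_add_one_eq_factorial,
      Nat.cast_prod, ← card_range k, ← prod_const, card_range, ← prod_mul_distrib]
    refine prod_congr rfl fun j hj => ?_
    rw [Nat.sub_sub, Nat.cast_sub (by simp at hj; omega)]
    push_cast
    ring
  | succ n hkn ih =>
    rw [range_add_one, erase_insert_of_ne (by omega), prod_insert (by simp), ih,
      Nat.sub_add_comm hkn, factorial_succ]
    push_cast [Nat.cast_sub hkn]
    ring

theorem eval_div_prod_range_add_eq_sum {K : Type*} [Field K] [CharZero K] {n : ℕ} {f : K[X]}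
    (hf : f.degree ≤ n) {t : K} (ht : ∀ j ≤ n, t + j ≠ 0) :
    f.eval t / ∏ j ∈ range (n + 1), (t + j) =
      ∑ k ∈ range (n + 1), (-1) ^ k * f.eval (-k : K) / (k ! * (n - k)!) / (t + k) := by
  have hinj : Set.InjOn (fun j : ℕ => -(j : K)) (range (n + 1)) := fun a _ b _ h => by simpa using h
  have hdeg : f.degree < #(range (n + 1)) := by
    rw [card_range]; exact hf.trans_lt (by exact_mod_cast Nat.lt_succ_self n)
  have key := Lagrange.eval_div_prod_sub_eq_sum hinj hdeg (t := t) fun j hj => by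
    rw [Ne, ← add_eq_zero_iff_eq_neg]
    exact ht j (by simpa [Nat.lt_succ_iff] using hj)
  simp only [sub_neg_eq_add] at key
  rw [key]
  refine sum_congr rfl fun k hk => ?_
  have hk : k ≤ n := Nat.lt_succ_iff.mp (mem_range.mp hk)
  rw [Lagrange.nodalWeight, prod_inv_distrib]
  simp only [neg_sub_neg]
  rw [prod_range_erase_natCast_sub hk, mul_assoc, mul_inv, ← inv_pow, inv_neg_one]
  ring

theorem pow_mul_prod_Icc_neg_sub {K : Type*} [Field K] (D i : K) (n k : ℕ) :
    D ^ (2 * n) * ∏ j ∈ Icc 1 n, (-(k : K) - j + i / D) =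
      (-1) ^ n * D ^ n * ∏ j ∈ Icc (k + 1) (n + k), (D * j - i) := by
  have hcard : #(Icc 1 n) = n := by simp
  calc D ^ (2 * n) * ∏ j ∈ Icc 1 n, (-(k : K) - j + i / D)
      = ∏ j ∈ Icc 1 n, D ^ 2 * (-(k : K) - j + i / D) := by
        rw [prod_mul_distrib, prod_const, hcard, pow_mul]
    _ = ∏ j ∈ Icc 1 n, -D * (D * (j + k : ℕ) - i) := by
        refine prod_congr rfl fun j _ => ?_
        by_cases hD : D = 0
        · simp [hD]
        · push_cast; field_simp; ring
    _ = (-1) ^ n * D ^ n * ∏ j ∈ Icc (k + 1) (n + k), (D * j - i) := by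
        rw [prod_mul_distrib, prod_const, hcard, neg_pow, Nat.add_comm k 1, ← map_add_right_Icc,
          prod_map]
        rfl

theorem stmt8_general (D n : ℕ) (i : ℤ) (c : ℕ → ℚ)
    (hc : ∀ k, c k = (-1) ^ (n + k) *
        (∏ j ∈ Finset.Icc (k + 1) (n + k), ((D : ℚ) * j - i)) /
          ((n.factorial : ℚ) / (Nat.gcd (D ^ n) n.factorial : ℚ)) *
        (n.choose k : ℚ) * ((D : ℚ) ^ n / (Nat.gcd (D ^ n) n.factorial : ℚ))) :
    (∀ k ≤ n, ∃ z : ℤ, c k = z) ∧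
      ∀ t : ℚ, (∀ j ≤ n, t + (j : ℚ) ≠ 0) →
        (D : ℚ) ^ (2 * n) * (∏ j ∈ Finset.Icc 1 n, (t - j + i / D)) /
            ∏ j ∈ Finset.range (n + 1), (t + j) =
          ∑ k ∈ Finset.range (n + 1), c k / (t + k) := by
  have hc' : ∀ k, c k = (((-1) ^ (n + k) * n.choose k *
      ((D ^ n * ∏ j ∈ Icc (k + 1) (n + k), ((D : ℤ) * j - i)) / n !) : ℤ) : ℚ) := by
    intro k
    rw [hc k, Int.cast_mul, Int.cast_div_charZero (Int.factorial_dvd_pow_mul_prod_Icc D n k i)]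
    push_cast
    field_simp
  refine ⟨fun k _ => ⟨_, hc' k⟩, fun t ht => ?_⟩
  set f : ℚ[X] := C ((D : ℚ) ^ (2 * n)) * ∏ j ∈ Icc 1 n, (X - C ((j : ℚ) - i / D))
  have hf_eval (x : ℚ) : f.eval x = D ^ (2 * n) * ∏ j ∈ Icc 1 n, (x - j + i / D) := by
    simp [f, eval_prod, sub_add]
  have hf_deg : f.degree ≤ n := by
    refine degree_le_of_natDegree_le
      ((natDegree_C_mul_le _ _).trans ((natDegree_prod_le _ _).trans ?_))
    simp only [natDegree_X_sub_C, sum_const, Nat.card_Icc, smul_eq_mul, mul_one]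
    omega
  rw [← hf_eval, eval_div_prod_range_add_eq_sum hf_deg ht]
  refine sum_congr rfl fun k hk => ?_
  have hk : k ≤ n := Nat.lt_succ_iff.mp (mem_range.mp hk)
  rw [hf_eval, pow_mul_prod_Icc_neg_sub, hc' k, Int.cast_mul,
    Int.cast_div_charZero (Int.factorial_dvd_pow_mul_prod_Icc D n k i)]
  push_cast
  rw [Nat.cast_choose ℚ hk]
  field_simp
  ring

theorem stmt8 (D n : ℕ) (hD : 1 ≤ D) (i : ℤ) (c : ℕ → ℚ)
    (hc : ∀ k, c k = (-1) ^ (n + k) *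
        (∏ j ∈ Finset.Icc (k + 1) (n + k), ((D : ℚ) * j - i)) /
          ((n.factorial : ℚ) / (Nat.gcd (D ^ n) n.factorial : ℚ)) *
        (n.choose k : ℚ) * ((D : ℚ) ^ n / (Nat.gcd (D ^ n) n.factorial : ℚ))) :
    (∀ k ≤ n, ∃ z : ℤ, c k = z) ∧
      ∀ t : ℚ, (∀ j ≤ n, t + (j : ℚ) ≠ 0) →
        (D : ℚ) ^ (2 * n) * (∏ j ∈ Finset.Icc 1 n, (t - j + i / D)) /
            ∏ j ∈ Finset.range (n + 1), (t + j) =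
          ∑ k ∈ Finset.range (n + 1), c k / (t + k) :=
  stmt8_general D n i c hc
end

section
/- Let k_1,...,k_r be pairwise distinct elements of {0,...,n} and s_1,...,s_r positive integers with s = s_1 + ... + s_r. Write 1/∏_{j=1}^r (t+k_j)^{s_j} = ∑_{j=1}^r ∑_{i=1}^{s_j} b_{i,j}/(t+k_j)^i for the partial-fraction decomposition. Then d_n^{s−i} · b_{i,j} ∈ ℤ for all i = 1,...,s_j and j = 1,...,r, where d_n = lcm{1,...,n}. -/
/-!
Fix `j` and put `u = t + k_j`. Clearing denominators in the partial-fraction identity and reducing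
modulo `u ^ s_j` gives `A(u) R(u) ≡ 1`, where `A(u) = ∑ᵢ b_{i,j} u ^ (s_j - i)` and
`R(u) = ∏_{l ≠ j} (u + c_l) ^ s_l` with `c_l = k_l - k_j`; hence `b_{i,j}` is the coefficient of
`u ^ (s_j - i)` in the power series `R⁻¹`. Each `c_l` is a nonzero integer of absolute value at
most `n`, so it divides `d = d_n`, and `d (d u + c_l)⁻¹ = (d / c_l) / (1 + (d / c_l) u)` has integer
coefficients. Therefore `d ^ σ R⁻¹(d u)` lies in `ℤ⟦u⟧` for `σ = ∑_{l ≠ j} s_l`, and its coefficient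
of `u ^ (s_j - i)` is `d ^ (s - i) b_{i,j}`.
-/

open Finset Polynomial

theorem Polynomial.one_eq_sum_of_partial_fraction {K : Type*} [Field K] [Infinite K] {ι : Type*}
    [Fintype ι] [DecidableEq ι] (c : ι → K) (e : ι → ℕ) (b : ι → ℕ → K)
    (hb : ∀ t : K, (∀ j, t + c j ≠ 0) →
      1 / ∏ j, (t + c j) ^ e j = ∑ j, ∑ i ∈ Icc 1 (e j), b j i / (t + c j) ^ i) :
    (1 : K[X]) = ∑ j, ∑ i ∈ Icc 1 (e j),
      C (b j i) * (X + C (c j)) ^ (e j - i) * ∏ l ∈ univ.erase j, (X + C (c l)) ^ e l := by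
  apply eq_of_infinite_eval_eq
  refine (Set.finite_range fun j => -c j).infinite_compl.mono fun t ht => ?_
  have ht : ∀ j, t + c j ≠ 0 := fun j h => ht ⟨j, by linear_combination -h⟩
  have hP : ∏ j, (t + c j) ^ e j ≠ 0 := prod_ne_zero_iff.mpr fun j _ => pow_ne_zero _ (ht j)
  have hterm : ∀ j, ∀ i ∈ Icc 1 (e j),
      b j i * (t + c j) ^ (e j - i) * ∏ l ∈ univ.erase j, (t + c l) ^ e l =
        (∏ l, (t + c l) ^ e l) * (b j i / (t + c j) ^ i) := by
    intro j i hi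
    rw [← mul_prod_erase _ _ (mem_univ j), ← pow_mul_pow_sub _ (mem_Icc.mp hi).2]
    field_simp [ht j]
  simp only [Set.mem_ofPred_eq, eval_one, eval_finsetSum, eval_mul, eval_pow, eval_add, eval_X,
    eval_C, eval_prod]
  rw [sum_congr rfl fun j _ => sum_congr rfl (hterm j), ← sum_congr rfl fun _ _ => mul_sum _ _ _,
    ← mul_sum, ← hb t ht, mul_one_div_cancel hP]

theorem pow_dvd_mul_sub_one_of_one_eq_sum {R : Type*} [CommRing R] {ι : Type*} [Fintype ι]
    [DecidableEq ι] (p : ι → R) (e : ι → ℕ) (b : ι → ℕ → R)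
    (h : 1 = ∑ j, ∑ i ∈ Icc 1 (e j), b j i * p j ^ (e j - i) * ∏ l ∈ univ.erase j, p l ^ e l)
    (j : ι) :
    p j ^ e j ∣ (∑ i ∈ Icc 1 (e j), b j i * p j ^ (e j - i)) * ∏ l ∈ univ.erase j, p l ^ e l - 1 := by
  rw [← add_sum_erase _ _ (mem_univ j), ← sum_mul] at h
  have hrest : p j ^ e j ∣ ∑ j' ∈ univ.erase j, ∑ i ∈ Icc 1 (e j'),
      b j' i * p j' ^ (e j' - i) * ∏ l ∈ univ.erase j', p l ^ e l := by
    refine dvd_sum fun j' hj' => dvd_sum fun i _ => dvd_mul_of_dvd_right ?_ _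
    exact dvd_prod_of_mem (fun l => p l ^ e l)
      (mem_erase.mpr ⟨(ne_of_mem_erase hj').symm, mem_univ j⟩)
  exact (dvd_neg.mpr hrest).trans (dvd_of_eq (by linear_combination h))

theorem Int.natCast_sub_dvd_lcm_Icc {a b n : ℕ} (hab : a ≠ b) (ha : a ≤ n) (hb : b ≤ n) :
    (a : ℤ) - b ∣ ((Icc 1 n).lcm id : ℕ) := by
  have h : ((a : ℤ) - b).natAbs ∈ Icc 1 n := by
    rw [mem_Icc]
    omega
  exact Int.natAbs_dvd.mp (Int.natCast_dvd_natCast.mpr (dvd_lcm (f := id) h))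

namespace PowerSeries

theorem coeff_eq_of_X_pow_dvd_mul_sub_one {R : Type*} [CommRing R] {A B P : R⟦X⟧} {N m : ℕ}
    (hA : X ^ N ∣ A * P - 1) (hB : B * P = 1) (hm : m < N) : coeff m A = coeff m B := by
  have hAB : X ^ N ∣ A - B := by
    have : A - B = B * (A * P - 1) := by linear_combination (-A) * hB
    exact this ▸ hA.mul_left B
  exact sub_eq_zero.mp (X_pow_dvd_iff.mp hAB m hm)

theorem coeff_sum_C_mul_X_pow_sub {R : Type*} [CommRing R] (a : ℕ → R) {N i : ℕ}
    (hi : i ∈ Icc 1 N) : coeff (N - i) (∑ i' ∈ Icc 1 N, C (a i') * X ^ (N - i')) = a i := by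
  rw [map_sum, sum_eq_single_of_mem i hi fun i' hi' hne => ?_]
  · simp
  · rw [coeff_C_mul_X_pow, if_neg]
    grind

section Field

variable {K : Type*} [Field K]

theorem coeff_inv_X_add_C {c : K} (hc : c ≠ 0) (m : ℕ) :
    coeff m (X + C c)⁻¹ = (-1) ^ m / c ^ (m + 1) := by
  have h0 : constantCoeff (X + C c : K⟦X⟧) ≠ 0 := by simpa using hc
  suffices (X + C c)⁻¹ = mk fun m : ℕ => (-1 : K) ^ m / c ^ (m + 1) by simp [this]
  rw [inv_eq_iff_mul_eq_one h0]
  ext (_ | m)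
  · simp [hc]
  · rw [mul_add, map_add, coeff_succ_mul_X, coeff_mul_C]
    simp only [coeff_mk, coeff_one, Nat.succ_ne_zero, if_false]
    field_simp
    ring

theorem prod_inv_pow_mul_prod_pow {ι : Type*} (t : Finset ι) (f : ι → K⟦X⟧) (e : ι → ℕ)
    (hf : ∀ l ∈ t, constantCoeff (f l) ≠ 0) :
    (∏ l ∈ t, (f l)⁻¹ ^ e l) * ∏ l ∈ t, f l ^ e l = 1 := by
  rw [← prod_mul_distrib]
  exact prod_eq_one fun l hl => by rw [← mul_pow, PowerSeries.inv_mul_cancel _ (hf l hl), one_pow]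

theorem coeff_prod_inv_X_add_C_eq_of_one_eq_sum {ι : Type*} [Fintype ι] [DecidableEq ι]
    (c : ι → K) (e : ι → ℕ) (b : ι → ℕ → K)
    (h : (1 : K[X]) = ∑ j, ∑ i ∈ Icc 1 (e j), Polynomial.C (b j i) *
      (Polynomial.X + Polynomial.C (c j)) ^ (e j - i) *
        ∏ l ∈ univ.erase j, (Polynomial.X + Polynomial.C (c l)) ^ e l)
    {j : ι} (hcj : c j = 0) (hc : ∀ l ∈ univ.erase j, c l ≠ 0) {i : ℕ} (hi : i ∈ Icc 1 (e j)) :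
    coeff (e j - i) (∏ l ∈ univ.erase j, (X + C (c l))⁻¹ ^ e l) = b j i := by
  have hser := congrArg Polynomial.coeToPowerSeries.ringHom h
  simp only [map_one, map_sum, map_mul, map_pow, map_prod, map_add,
    Polynomial.coeToPowerSeries.ringHom_apply, Polynomial.coe_X, Polynomial.coe_C] at hser
  have hdvd := pow_dvd_mul_sub_one_of_one_eq_sum _ _ _ hser j
  simp only [hcj, map_zero, add_zero] at hdvd
  have hinv := prod_inv_pow_mul_prod_pow (univ.erase j) (fun l => X + C (c l)) e
    fun l hl => by simpa using hc l hl
  rw [← coeff_eq_of_X_pow_dvd_mul_sub_one hdvd hinv (by grind), coeff_sum_C_mul_X_pow_sub _ hi]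

end Field

theorem C_mul_rescale_inv_X_add_C_mem_range {c d : ℤ} (hc : c ≠ 0) (hcd : c ∣ d) :
    C (d : ℚ) * rescale (d : ℚ) (X + C (c : ℚ))⁻¹ ∈ (map (Int.castRingHom ℚ)).range := by
  obtain ⟨w, rfl⟩ := hcd
  refine ⟨mk fun m => (-1) ^ m * w ^ (m + 1), ?_⟩
  ext m
  have hc' : (c : ℚ) ≠ 0 := Int.cast_ne_zero.mpr hc
  rw [coeff_map, coeff_mk, coeff_C_mul, coeff_rescale, coeff_inv_X_add_C hc', eq_intCast]
  push_cast
  field_simp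
  ring

theorem C_pow_mul_rescale_prod_inv_X_add_C_mem_range {ι : Type*} (t : Finset ι) (c : ι → ℤ)
    (e : ι → ℕ) {d : ℤ} (hc : ∀ l ∈ t, c l ≠ 0) (hcd : ∀ l ∈ t, c l ∣ d) :
    C ((d : ℚ) ^ ∑ l ∈ t, e l) * rescale (d : ℚ) (∏ l ∈ t, (X + C (c l : ℚ))⁻¹ ^ e l) ∈
      (map (Int.castRingHom ℚ)).range := by
  rw [← prod_pow_eq_pow_sum, map_prod, map_prod, ← prod_mul_distrib]
  refine Subring.prod_mem _ fun l hl => ?_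
  rw [map_pow, map_pow, ← mul_pow]
  exact Subring.pow_mem _ (C_mul_rescale_inv_X_add_C_mem_range (hc l hl) (hcd l hl)) _

theorem exists_int_eq_pow_mul_coeff_prod_inv_X_add_C {ι : Type*} (t : Finset ι) (c : ι → ℤ)
    (e : ι → ℕ) {d : ℤ} (hc : ∀ l ∈ t, c l ≠ 0) (hcd : ∀ l ∈ t, c l ∣ d) (m : ℕ) :
    ∃ z : ℤ, (d : ℚ) ^ (∑ l ∈ t, e l + m) * coeff m (∏ l ∈ t, (X + C (c l : ℚ))⁻¹ ^ e l) = z := by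
  obtain ⟨f, hf⟩ := C_pow_mul_rescale_prod_inv_X_add_C_mem_range t c e hc hcd
  refine ⟨coeff m f, ?_⟩
  have := congrArg (coeff m) hf
  rw [coeff_map, coeff_C_mul, coeff_rescale] at this
  rw [pow_add, mul_assoc, ← this, eq_intCast]

end PowerSeries

theorem stmt9_general (n r : ℕ) (k : Fin r → ℕ) (hk : Function.Injective k)
    (hkn : ∀ j, k j ≤ n) (sIdx : Fin r → ℕ)
    (s : ℕ) (hsum : s = ∑ j, sIdx j) (b : Fin r → ℕ → ℚ)
    (hb : ∀ t : ℚ, (∀ j, t + (k j : ℚ) ≠ 0) →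
      1 / ∏ j, (t + (k j : ℚ)) ^ sIdx j =
        ∑ j, ∑ i ∈ Finset.Icc 1 (sIdx j), b j i / (t + (k j : ℚ)) ^ i) :
    ∀ j, ∀ i ∈ Finset.Icc 1 (sIdx j),
      ∃ z : ℤ, (((Finset.Icc 1 n).lcm id : ℕ) : ℚ) ^ (s - i) * b j i = z := by
  intro j i hi
  set c : Fin r → ℤ := fun l => k l - k j
  have hshift : ∀ (t : ℚ) l, t - k j + k l = t + c l := fun t l => by push_cast [c]; ring
  have hpoly := Polynomial.one_eq_sum_of_partial_fraction (fun l => (c l : ℚ)) sIdx b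
    fun t ht => by simpa only [hshift] using hb (t - k j) fun l => hshift t l ▸ ht l
  have hc : ∀ l ∈ univ.erase j, c l ≠ 0 := fun l hl =>
    sub_ne_zero.mpr fun h => ne_of_mem_erase hl (hk (by exact_mod_cast h))
  rw [← PowerSeries.coeff_prod_inv_X_add_C_eq_of_one_eq_sum _ _ _ hpoly (by simp [c])
    (fun l hl => Int.cast_ne_zero.mpr (hc l hl)) hi]
  have hexp : ∑ l ∈ univ.erase j, sIdx l + (sIdx j - i) = s - i := by
    have := add_sum_erase univ sIdx (mem_univ j)
    have := mem_Icc.mp hi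
    omega
  obtain ⟨z, hz⟩ := PowerSeries.exists_int_eq_pow_mul_coeff_prod_inv_X_add_C (univ.erase j) c sIdx
    hc (fun l hl => Int.natCast_sub_dvd_lcm_Icc (hk.ne (ne_of_mem_erase hl)) (hkn l) (hkn j))
    (sIdx j - i)
  rw [hexp, Int.cast_natCast] at hz
  exact ⟨z, hz⟩

theorem stmt9 (n r : ℕ) (hr : 1 ≤ r) (k : Fin r → ℕ) (hk : Function.Injective k)
    (hkn : ∀ j, k j ≤ n) (sIdx : Fin r → ℕ) (hs : ∀ j, 1 ≤ sIdx j)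
    (s : ℕ) (hsum : s = ∑ j, sIdx j) (b : Fin r → ℕ → ℚ)
    (hb : ∀ t : ℚ, (∀ j, t + (k j : ℚ) ≠ 0) →
      1 / ∏ j, (t + (k j : ℚ)) ^ sIdx j =
        ∑ j, ∑ i ∈ Finset.Icc 1 (sIdx j), b j i / (t + (k j : ℚ)) ^ i) :
    ∀ j, ∀ i ∈ Finset.Icc 1 (sIdx j),
      ∃ z : ℤ, (((Finset.Icc 1 n).lcm id : ℕ) : ℚ) ^ (s - i) * b j i = z :=
  stmt9_general n r k hk hkn sIdx s hsum b hb
end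

section
/- Let D ≥ 1, n ≥ 1 with nD even, s ≥ 3D odd, and define a_i := ∑_{k=0}^n a_{i,k} where a_{i,k} are the partial-fraction coefficients of R_n^{(D)}. Then a_i = 0 for every even i, and ∑_{k=0}^n a_{1,k} = 0. -/
/-!
A partial-fraction sum `∑ᵢ ∑ₖ b i k / (t + k) ^ i` that vanishes at all but finitely many `t` has
all coefficients zero: clear denominators and evaluate the resulting polynomial at `t = -k`,
which isolates the top-order coefficients, then descend in the order.

Since `3Dn` and `s + 1` are even, the rational function satisfies `R(-n - t) = -R(t)`, and
reflecting the expansion gives `a i k = -(-1) ^ i a i (n - k)` by uniqueness; for even `i` this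
makes `∑ₖ a i k` equal to its own negative. After clearing denominators by
`∏ₖ (t + k) ^ (s + 1)`, the residue sum `∑ₖ a 1 k` is the coefficient of `t ^ ((n + 1)(s + 1) - 1)`,
which vanishes because the numerator of `R` only has degree `3Dn + 1`.
-/

open Finset Polynomial Filter

section PartialFractions

variable {K : Type*} [Field K]

def partialFractionSum (b : ℕ → ℕ → K) (s n : ℕ) (t : K) : K :=
  ∑ i ∈ Icc 1 s, ∑ k ∈ range (n + 1), b i k / (t + k) ^ i

noncomputable def partialFractionNumerator (b : ℕ → ℕ → K) (s e n : ℕ) : K[X] :=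
  ∑ i ∈ Icc 1 s, ∑ k ∈ range (n + 1),
    C (b i k) *
      ((X + C (k : K)) ^ (e - i) * ∏ k' ∈ (range (n + 1)).erase k, (X + C (k' : K)) ^ e)

lemma partialFractionSum_add (b b' : ℕ → ℕ → K) (s n : ℕ) (t : K) :
    partialFractionSum (fun i k => b i k + b' i k) s n t =
      partialFractionSum b s n t + partialFractionSum b' s n t := by
  simp only [partialFractionSum, add_div, sum_add_distrib]

lemma partialFractionSum_succ (b : ℕ → ℕ → K) (s n : ℕ) (t : K) :
    partialFractionSum b (s + 1) n t =
      partialFractionSum b s n t + ∑ k ∈ range (n + 1), b (s + 1) k / (t + k) ^ (s + 1) :=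
  sum_Icc_succ_top (Nat.le_add_left 1 s) _

lemma partialFractionSum_neg_sub (b : ℕ → ℕ → K) (s n : ℕ) (t : K) :
    partialFractionSum b s n (-n - t) =
      partialFractionSum (fun i k => (-1) ^ i * b i (n - k)) s n t := by
  refine sum_congr rfl fun i _ => ?_
  rw [← sum_range_reflect]
  refine sum_congr rfl fun k hk => ?_
  have hk : k ≤ n := Nat.lt_succ_iff.mp (mem_range.mp hk)
  rw [Nat.add_sub_cancel, Nat.cast_sub hk, show -(n : K) - t + (n - k) = -(t + k) by ring,
    neg_pow]
  rcases neg_one_pow_eq_or K i with h | h <;> simp [h, neg_div, div_neg]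

lemma eventually_cofinite_add_natCast_ne_zero (n : ℕ) :
    ∀ᶠ t : K in cofinite, ∀ k ≤ n, t + k ≠ 0 := by
  refine (eventually_all_finite (Set.finite_Iic n)).2 fun k _ => ?_
  filter_upwards [eventually_cofinite_ne (-(k : K))] with t ht
  rwa [Ne, add_eq_zero_iff_eq_neg]

lemma eval_partialFractionNumerator {b : ℕ → ℕ → K} {s e n : ℕ} (hse : s ≤ e) {t : K}
    (ht : ∀ k ≤ n, t + k ≠ 0) :
    (partialFractionNumerator b s e n).eval t =
      partialFractionSum b s n t * ∏ k ∈ range (n + 1), (t + k) ^ e := by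
  simp only [partialFractionNumerator, partialFractionSum, eval_finsetSum, eval_mul, eval_C,
    eval_pow, eval_add, eval_X, eval_prod, sum_mul]
  refine sum_congr rfl fun i hi => sum_congr rfl fun k hk => ?_
  have htk : t + k ≠ 0 := ht k (Nat.lt_succ_iff.mp (mem_range.mp hk))
  rw [← mul_prod_erase _ _ hk, ← pow_sub_mul_pow (t + k) ((mem_Icc.mp hi).2.trans hse)]
  field_simp

lemma eval_neg_partialFractionNumerator (b : ℕ → ℕ → K) (s n : ℕ) {k₀ : ℕ}
    (hk₀ : k₀ ≤ n) :
    (partialFractionNumerator b (s + 1) (s + 1) n).eval (-(k₀ : K)) =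
      b (s + 1) k₀ * ∏ k ∈ (range (n + 1)).erase k₀, (-(k₀ : K) + k) ^ (s + 1) := by
  have hk₀ : k₀ ∈ range (n + 1) := mem_range.mpr (Nat.lt_succ_of_le hk₀)
  simp only [partialFractionNumerator, eval_finsetSum, eval_mul, eval_C, eval_pow, eval_add,
    eval_X, eval_prod]
  have hpole : ∀ k ∈ range (n + 1), k ≠ k₀ →
      ∏ k' ∈ (range (n + 1)).erase k, (-(k₀ : K) + k') ^ (s + 1) = 0 := fun k _ hk =>
    prod_eq_zero (mem_erase.mpr ⟨Ne.symm hk, hk₀⟩) (by simp)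
  rw [sum_eq_single (s + 1), sum_eq_single k₀]
  · simp
  · intro k hk hkk₀; rw [hpole k hk hkk₀]; simp
  · intro h; exact absurd hk₀ h
  · intro i hi hi'
    refine sum_eq_zero fun k hk => ?_
    obtain rfl | hkk₀ := eq_or_ne k k₀
    · have : s + 1 - i ≠ 0 := by have := (mem_Icc.mp hi).2; omega
      simp [this]
    · rw [hpole k hk hkk₀]; simp
  · simp

lemma Polynomial.eq_of_eventually_eval_eq [Infinite K] {p q : K[X]}
    (h : ∀ᶠ x in cofinite, p.eval x = q.eval x) : p = q :=
  eq_of_infinite_eval_eq p q (frequently_cofinite_iff_infinite.mp h.frequently)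

lemma partialFractionNumerator_eq_of_eventually [Infinite K] {b : ℕ → ℕ → K} {s e n : ℕ}
    (hse : s ≤ e) {P : K[X]}
    (h : ∀ᶠ t in cofinite,
      partialFractionSum b s n t = P.eval t / ∏ k ∈ range (n + 1), (t + k) ^ e) :
    partialFractionNumerator b s e n = P := by
  refine eq_of_eventually_eval_eq ?_
  filter_upwards [h, eventually_cofinite_add_natCast_ne_zero n] with t h ht
  have hQ : ∏ k ∈ range (n + 1), (t + k) ^ e ≠ 0 :=
    prod_ne_zero_iff.mpr fun k hk => pow_ne_zero _ (ht k (Nat.lt_succ_iff.mp (mem_range.mp hk)))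
  rw [eval_partialFractionNumerator hse ht, h, div_mul_cancel₀ _ hQ]

theorem eq_zero_of_eventually_partialFractionSum_eq_zero [CharZero K] {b : ℕ → ℕ → K}
    {s n : ℕ} (h : ∀ᶠ t in cofinite, partialFractionSum b s n t = 0) :
    ∀ i ∈ Icc 1 s, ∀ k ≤ n, b i k = 0 := by
  induction s with
  | zero => simp
  | succ s ih =>
    have hnum : partialFractionNumerator b (s + 1) (s + 1) n = 0 :=
      partialFractionNumerator_eq_of_eventually le_rfl (by simpa using h)
    have htop : ∀ k ≤ n, b (s + 1) k = 0 := fun k₀ hk₀ => by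
      have := eval_neg_partialFractionNumerator b s n hk₀
      rw [hnum, eval_zero, eq_comm, mul_eq_zero] at this
      refine this.resolve_right (prod_ne_zero_iff.mpr fun k hk => pow_ne_zero _ ?_)
      rw [neg_add_eq_sub, sub_ne_zero, Ne, Nat.cast_inj]
      exact (mem_erase.mp hk).1
    have hlow : ∀ᶠ t in cofinite, partialFractionSum b s n t = 0 := by
      filter_upwards [h] with t ht
      rw [partialFractionSum_succ, sum_eq_zero fun k hk => ?_, add_zero] at ht
      · exact ht
      · rw [htop k (Nat.lt_succ_iff.mp (mem_range.mp hk)), zero_div]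
    intro i hi
    obtain rfl | hi' := eq_or_ne i (s + 1)
    · exact htop
    · exact ih hlow i (mem_Icc.mpr ⟨(mem_Icc.mp hi).1, by have := (mem_Icc.mp hi).2; omega⟩)

lemma monic_X_add_C_pow_mul_prod_erase (n m e k : ℕ) :
    ((X + C (k : K)) ^ m * ∏ k' ∈ (range (n + 1)).erase k, (X + C (k' : K)) ^ e).Monic :=
  ((monic_X_add_C _).pow _).mul (monic_prod_of_monic _ _ fun _ _ => (monic_X_add_C _).pow _)

lemma natDegree_X_add_C_pow_mul_prod_erase {n k : ℕ} (hk : k ∈ range (n + 1)) (m e : ℕ) :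
    ((X + C (k : K)) ^ m * ∏ k' ∈ (range (n + 1)).erase k, (X + C (k' : K)) ^ e).natDegree =
      m + n * e := by
  rw [((monic_X_add_C _).pow _).natDegree_mul
      (monic_prod_of_monic _ _ fun _ _ => (monic_X_add_C _).pow _),
    natDegree_prod_of_monic _ _ fun _ _ => (monic_X_add_C _).pow _]
  simp only [natDegree_pow, natDegree_X_add_C, mul_one, sum_const, card_erase_of_mem hk,
    card_range, Nat.add_sub_cancel, smul_eq_mul]

lemma coeff_partialFractionNumerator (b : ℕ → ℕ → K) {s e n : ℕ} (hs : 1 ≤ s)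
    (hse : s ≤ e) :
    (partialFractionNumerator b s e n).coeff ((n + 1) * e - 1) =
      ∑ k ∈ range (n + 1), b 1 k := by
  rw [partialFractionNumerator, finsetSum_coeff, sum_eq_single 1]
  · rw [finsetSum_coeff]
    refine sum_congr rfl fun k hk => ?_
    have hdeg : (n + 1) * e - 1 = e - 1 + n * e := by rw [add_one_mul]; omega
    rw [coeff_C_mul, hdeg, ← natDegree_X_add_C_pow_mul_prod_erase (K := K) hk,
      (monic_X_add_C_pow_mul_prod_erase n (e - 1) e k).coeff_natDegree, mul_one]
  · intro i hi hi1
    obtain ⟨hi, his⟩ := mem_Icc.mp hi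
    rw [finsetSum_coeff]
    refine sum_eq_zero fun k hk => ?_
    rw [coeff_C_mul, coeff_eq_zero_of_natDegree_lt, mul_zero]
    rw [natDegree_X_add_C_pow_mul_prod_erase hk, add_one_mul]
    omega
  · simp [hs]

theorem sum_residues_eq_zero_of_eventually_eq [Infinite K] {b : ℕ → ℕ → K} {s e n : ℕ}
    (hs : 1 ≤ s) (hse : s ≤ e) {P : K[X]} (hP : P.natDegree + 1 < (n + 1) * e)
    (h : ∀ᶠ t in cofinite,
      partialFractionSum b s n t = P.eval t / ∏ k ∈ range (n + 1), (t + k) ^ e) :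
    ∑ k ∈ range (n + 1), b 1 k = 0 := by
  rw [← coeff_partialFractionNumerator b hs hse, partialFractionNumerator_eq_of_eventually hse h]
  exact coeff_eq_zero_of_natDegree_lt (by omega)

end PartialFractions

lemma prod_range_neg_add_mul {R : Type*} [CommRing R] (x h : R) (N : ℕ) :
    ∏ j ∈ range (N + 1), (-(x + N * h) + j * h) =
      (-1) ^ (N + 1) * ∏ j ∈ range (N + 1), (x + j * h) := by
  have hsign : (-1 : R) ^ (N + 1) = ∏ _j ∈ range (N + 1), (-1) := by simp
  rw [hsign, ← prod_range_reflect (fun j => x + j * h), ← prod_mul_distrib]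
  refine prod_congr rfl fun j hj => ?_
  rw [Nat.add_sub_cancel, Nat.cast_sub (Nat.lt_succ_iff.mp (mem_range.mp hj))]
  ring

lemma prod_range_neg_sub_add_pow {R : Type*} [CommRing R] (t : R) (n : ℕ) {e : ℕ}
    (he : Even e) :
    ∏ k ∈ range (n + 1), (-n - t + k) ^ e = ∏ k ∈ range (n + 1), (t + k) ^ e := by
  calc ∏ k ∈ range (n + 1), (-n - t + k) ^ e
      = (∏ k ∈ range (n + 1), (-(t + n * 1) + k * 1)) ^ e := by
        rw [prod_pow]; congr 1; exact prod_congr rfl fun k _ => by ring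
    _ = ∏ k ∈ range (n + 1), (t + k) ^ e := by
        rw [prod_range_neg_add_mul, mul_pow, ← pow_mul, mul_comm (n + 1) e, pow_mul,
          he.neg_one_pow, one_pow, one_mul, prod_pow]
        simp

lemma prod_range_sub_add_div_neg_sub {K : Type*} [Field K] {D n : ℕ} (hD : (D : K) ≠ 0)
    (heven : Even (3 * D * n)) (t : K) :
    ∏ j ∈ range (3 * D * n + 1), (-n - t - n + j / D) =
      -∏ j ∈ range (3 * D * n + 1), (t - n + j / D) := by
  have hfactor : ∀ j : ℕ,
      -(n : K) - t - n + j / D = -(t - n + ↑(3 * D * n) * (D : K)⁻¹) + j * (D : K)⁻¹ :=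
    fun j => by push_cast; field_simp; ring
  rw [prod_congr rfl fun j _ => hfactor j, prod_range_neg_add_mul, heven.add_one.neg_one_pow,
    neg_one_mul]
  simp only [← div_eq_mul_inv]

lemma sum_range_eq_zero_of_add_reflect_eq_zero {K : Type*} [Field K] [CharZero K] {f : ℕ → K}
    {n : ℕ} (h : ∀ k ≤ n, f k + f (n - k) = 0) : ∑ k ∈ range (n + 1), f k = 0 := by
  have : ∑ k ∈ range (n + 1), f k + ∑ k ∈ range (n + 1), f k = 0 := by
    nth_rw 2 [← sum_range_reflect]
    rw [← sum_add_distrib]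
    exact sum_eq_zero fun k hk => by
      rw [Nat.add_sub_cancel]; exact h k (Nat.lt_succ_iff.mp (mem_range.mp hk))
  rwa [← two_mul, mul_eq_zero, or_iff_right two_ne_zero] at this

theorem stmt14_general (D s n : ℕ) (hD : 1 ≤ D) (hnD : Even (n * D))
    (hs : 3 * D ≤ s) (hsodd : Odd s)
    (a : ℕ → ℕ → ℚ)
    (ha : ∀ t : ℚ, (∀ j ≤ n, t + (j : ℚ) ≠ 0) →
      (D : ℚ) ^ (6 * (D - 1) * n) * (n.factorial : ℚ) ^ (s - (3 * D - 1)) *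
          (∏ j ∈ Finset.range (3 * D * n + 1), (t - n + (j : ℚ) / D)) /
            ∏ j ∈ Finset.range (n + 1), (t + j) ^ (s + 1) =
        ∑ i ∈ Finset.Icc 1 s, ∑ k ∈ Finset.range (n + 1), a i k / (t + k) ^ i) :
    (∀ i ∈ Finset.Icc 1 s, Even i → ∑ k ∈ Finset.range (n + 1), a i k = 0) ∧
      ∑ k ∈ Finset.range (n + 1), a 1 k = 0 := by
  have hD0 : (D : ℚ) ≠ 0 := Nat.cast_ne_zero.mpr (by omega)
  set P : ℚ[X] := C ((D : ℚ) ^ (6 * (D - 1) * n) * (n.factorial : ℚ) ^ (s - (3 * D - 1))) *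
    ∏ j ∈ range (3 * D * n + 1), (X - C (n : ℚ) + C ((j : ℚ) / D))
  have hR : ∀ᶠ t in cofinite, partialFractionSum a s n t =
      P.eval t / ∏ k ∈ range (n + 1), (t + k) ^ (s + 1) := by
    filter_upwards [eventually_cofinite_add_natCast_ne_zero n] with t ht
    rw [partialFractionSum, ← ha t ht]
    simp [P, eval_prod]
  have hP_odd : ∀ t : ℚ, P.eval (-n - t) = -P.eval t := fun t => by
    have heven : Even (3 * D * n) := by rw [mul_assoc, mul_comm D]; exact hnD.mul_left 3
    simp only [P, eval_mul, eval_C, eval_prod, eval_add, eval_sub, eval_X,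
      prod_range_sub_add_div_neg_sub hD0 heven, mul_neg]
  have hR_odd : ∀ t : ℚ, P.eval (-n - t) / ∏ k ∈ range (n + 1), (-n - t + k) ^ (s + 1) =
      -(P.eval t / ∏ k ∈ range (n + 1), (t + k) ^ (s + 1)) := fun t => by
    rw [hP_odd, prod_range_neg_sub_add_pow t n hsodd.add_one, neg_div]
  have hsymm : ∀ i ∈ Icc 1 s, ∀ k ≤ n, a i k + (-1) ^ i * a i (n - k) = 0 := by
    refine eq_zero_of_eventually_partialFractionSum_eq_zero ?_
    filter_upwards [hR, sub_right_injective.tendsto_cofinite.eventually hR] with t h₁ h₂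
    rw [partialFractionSum_add, ← partialFractionSum_neg_sub, h₁, h₂, hR_odd, add_neg_cancel]
  have hdeg : P.natDegree ≤ 3 * D * n + 1 := by
    refine natDegree_C_mul_le _ _ |>.trans <| (natDegree_prod_le _ _).trans ?_
    refine (sum_le_sum fun j _ => (by compute_degree! : _ ≤ 1)).trans ?_
    simp
  refine ⟨fun i hi heven => sum_range_eq_zero_of_add_reflect_eq_zero fun k hk => ?_,
    sum_residues_eq_zero_of_eventually_eq (by omega) (Nat.le_succ s) ?_ hR⟩
  · simpa [heven.neg_one_pow] using hsymm i hi k hk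
  · nlinarith

theorem stmt14 (D s n : ℕ) (hD : 1 ≤ D) (hn : 1 ≤ n) (hnD : Even (n * D))
    (hs : 3 * D ≤ s) (hsodd : Odd s)
    (a : ℕ → ℕ → ℚ)
    (ha : ∀ t : ℚ, (∀ j ≤ n, t + (j : ℚ) ≠ 0) →
      (D : ℚ) ^ (6 * (D - 1) * n) * (n.factorial : ℚ) ^ (s - (3 * D - 1)) *
          (∏ j ∈ Finset.range (3 * D * n + 1), (t - n + (j : ℚ) / D)) /
            ∏ j ∈ Finset.range (n + 1), (t + j) ^ (s + 1) =
        ∑ i ∈ Finset.Icc 1 s, ∑ k ∈ Finset.range (n + 1), a i k / (t + k) ^ i) :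
    (∀ i ∈ Finset.Icc 1 s, Even i → ∑ k ∈ Finset.range (n + 1), a i k = 0) ∧
      ∑ k ∈ Finset.range (n + 1), a 1 k = 0 :=
  stmt14_general D s n hD hnD hs hsodd a ha
end

section
/- For each integer m ≥ 1, the (m+1)×(m+1) matrix M with entries M_{α,β} = 2^{i_α · β} − 1 (for α, β = 1,...,m+1), where i_1 < i_2 < ... < i_{m+1} are distinct positive integers, is invertible over ℚ. -/
theorem stmt16 (m : ℕ) (hm : 1 ≤ m) (i : Fin (m + 1) → ℕ)
    (hpos : ∀ α, 1 ≤ i α) (hmono : StrictMono i) :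
    (Matrix.of fun α β : Fin (m + 1) => (2 : ℚ) ^ (i α * ((β : ℕ) + 1)) - 1).det ≠ 0 := by
  set x : Fin (m + 1) → ℚ := fun α => 2 ^ (i α) with hx
  have hxmono : StrictMono x := fun a b hab => by
    dsimp [x]
    exact (pow_lt_pow_iff_right₀ (by norm_num : (1:ℚ) < 2)).mpr (hmono hab)
  have hx2 : ∀ α, (2 : ℚ) ≤ x α := fun α => by
    dsimp [x]
    calc (2:ℚ) = 2 ^ 1 := (pow_one 2).symm
    _ ≤ 2 ^ (i α) := by
      exact pow_le_pow_right₀ (by norm_num) (hpos α)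
  have key : (Matrix.of fun α β : Fin (m + 1) => (2 : ℚ) ^ (i α * ((β : ℕ) + 1)) - 1)
      = Matrix.diagonal (fun α => x α - 1) * (Matrix.vandermonde x *
        Matrix.of (fun k β : Fin (m + 1) => if (k : ℕ) ≤ (β : ℕ) then (1 : ℚ) else 0)) := by
    ext α β
    rw [Matrix.mul_apply]
    have h1 : ∀ j : Fin (m + 1),
        Matrix.diagonal (fun α => x α - 1) α j *
          (Matrix.vandermonde x * Matrix.of
            (fun k β : Fin (m + 1) => if (k : ℕ) ≤ (β : ℕ) then (1 : ℚ) else 0)) j β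
        = if α = j then (x α - 1) *
            (Matrix.vandermonde x * Matrix.of
              (fun k β : Fin (m + 1) => if (k : ℕ) ≤ (β : ℕ) then (1 : ℚ) else 0)) α β
          else 0 := by
      intro j
      by_cases h : α = j
      · subst h; simp
      · rw [Matrix.diagonal_apply_ne _ h, zero_mul, if_neg h]
    rw [Finset.sum_congr rfl (fun j _ => h1 j), Finset.sum_ite_eq Finset.univ α,
      if_pos (Finset.mem_univ α)]
    rw [Matrix.mul_apply]
    have h2 : ∑ j : Fin (m + 1), Matrix.vandermonde x α j *
        Matrix.of (fun k β : Fin (m + 1) => if (k : ℕ) ≤ (β : ℕ) then (1 : ℚ) else 0) j β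
        = ∑ k ∈ Finset.range ((β : ℕ) + 1), x α ^ k := by
      simp only [Matrix.vandermonde_apply, Matrix.of_apply, mul_ite, mul_one, mul_zero]
      rw [Fin.sum_univ_eq_sum_range (fun k => if k ≤ (β : ℕ) then x α ^ k else 0)]
      rw [← Finset.sum_filter]
      congr 1
      ext k
      simp only [Finset.mem_filter, Finset.mem_range]
      omega
    rw [h2, mul_comm, geom_sum_mul]
    simp [x, pow_mul, mul_comm]
  rw [key, Matrix.det_mul, Matrix.det_mul, Matrix.det_diagonal, Matrix.det_vandermonde]
  have hupper : (Matrix.of (fun k β : Fin (m + 1) =>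
      if (k : ℕ) ≤ (β : ℕ) then (1 : ℚ) else 0)).BlockTriangular id := by
    intro a b hab
    simp only [Matrix.of_apply, id] at *
    rw [if_neg (by omega)]
  rw [Matrix.det_of_upperTriangular hupper]
  simp only [Matrix.diag_apply, Matrix.of_apply, le_refl, if_true,
    Finset.prod_const_one, mul_one]
  apply mul_ne_zero
  · exact Finset.prod_ne_zero_iff.mpr fun α _ => by
      have := hx2 α; intro h; nlinarith
  · exact Finset.prod_ne_zero_iff.mpr fun β _ =>
      Finset.prod_ne_zero_iff.mpr fun α hα => by
        have : x β < x α := hxmono (Finset.mem_Ioi.mp hα)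
        intro h; nlinarith
end

section
/- Let D ≥ 1 and s ≥ 1 and set f_D(x,s) = ((x+3)/x)^D ((x+1)/(x+2))^{s+1}. For s sufficiently large, f_D(4·2^{−(s+1)/D}, s) < 1 < f_D(2^{−(s+1)/D}, s); consequently the unique positive solution x_0(s) of f_D(x, s) = 1 satisfies 2^{−(s+1)/D} < x_0(s) < 4·2^{−(s+1)/D}. -/
open Filter Real

lemma l1 (t : ℝ) (h0 : 0 ≤ t) (h1 : t ≤ 1) : t * Real.log 2 ≤ Real.log (1 + t) := by
  rw [Real.le_log_iff_exp_le (by linarith)]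
  have h := convexOn_exp.2 (Set.mem_univ (0:ℝ)) (Set.mem_univ (Real.log 2))
    (by linarith : (0:ℝ) ≤ 1 - t) h0 (by ring)
  simp only [smul_eq_mul, mul_zero, zero_add, Real.exp_zero, Real.exp_log two_pos] at h
  calc Real.exp (t * Real.log 2) ≤ (1 - t) * 1 + t * 2 := h
    _ = 1 + t := by ring

lemma e3 (D : ℕ) (hD : 1 ≤ D) :
    ∃ S : ℕ, ∀ s : ℕ, S ≤ s →
      (D:ℝ) * Real.log (12 * ((s:ℝ)+1) / D) < ((s:ℝ)+1) * Real.log 2 / 2 := by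
  have hDr : (0:ℝ) < (D:ℝ) := by exact_mod_cast hD
  have hl2 : (0:ℝ) < Real.log 2 := Real.log_pos (by norm_num)
  have hb := Real.isLittleO_log_id_atTop.bound (show (0:ℝ) < Real.log 2 / 48 by positivity)
  have htend : Tendsto (fun s : ℕ => 12 * ((s:ℝ)+1) / D) atTop atTop := by
    apply Tendsto.atTop_div_const hDr
    apply Tendsto.const_mul_atTop (by norm_num : (0:ℝ) < 12)
    exact tendsto_atTop_add_const_right _ 1 tendsto_natCast_atTop_atTop
  have h1 := htend.eventually (hb.and (eventually_ge_atTop (1:ℝ)))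
  rw [eventually_atTop] at h1
  obtain ⟨S, hS⟩ := h1
  refine ⟨S, fun s hs => ?_⟩
  obtain ⟨hbound, hge⟩ := hS s hs
  set t : ℝ := 12 * ((s:ℝ)+1) / D with ht
  have ht0 : (0:ℝ) < t := by linarith
  have hlt : Real.log t ≤ Real.log 2 / 48 * t := by
    simp only [Real.norm_eq_abs, id_eq] at hbound
    rwa [abs_of_nonneg (Real.log_nonneg hge), abs_of_nonneg (le_of_lt ht0)] at hbound
  have hσ : (0:ℝ) < (s:ℝ) + 1 := by positivity
  have key : (D:ℝ) * Real.log t ≤ ((s:ℝ)+1) * Real.log 2 / 4 := by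
    have h2 : (D:ℝ) * (Real.log 2 / 48 * t) = ((s:ℝ)+1) * Real.log 2 / 4 := by
      rw [ht]; field_simp; ring
    nlinarith
  nlinarith

set_option maxHeartbeats 2000000 in
lemma lemB (D : ℕ) (hD : 1 ≤ D) :
    ∃ S : ℕ, ∀ s : ℕ, S ≤ s → ∀ x : ℝ, 4 * (2:ℝ) ^ (-((s:ℝ)+1)/D) ≤ x →
      ((x + 3) / x) ^ D * ((x + 1) / (x + 2)) ^ (s + 1) < 1 := by
  obtain ⟨S1, hS1⟩ := e3 D hD
  refine ⟨max S1 (20 * D), fun s hs x hx => ?_⟩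
  have hDr : (0:ℝ) < (D:ℝ) := by exact_mod_cast hD
  have hD1 : (1:ℝ) ≤ (D:ℝ) := by exact_mod_cast hD
  set ℓ : ℝ := Real.log 2 with hℓ
  have hl2 : (0.6931471803 : ℝ) < ℓ := Real.log_two_gt_d9
  set σ : ℝ := (s:ℝ) + 1 with hσdef
  have hσ20 : 20 * (D:ℝ) ≤ σ := by
    have : 20 * D ≤ s := le_trans (le_max_right _ _) hs
    have := (Nat.cast_le (α := ℝ)).mpr this
    push_cast at this ⊢
    linarith
  have hσ0 : (0:ℝ) < σ := by nlinarith
  set a : ℝ := (2:ℝ) ^ (-σ/(D:ℝ)) with ha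
  have haa : 0 < a := Real.rpow_pos_of_pos two_pos _
  have hx0 : 0 < x := lt_of_lt_of_le (by linarith) hx
  have hloga : Real.log a = (-σ/(D:ℝ)) * ℓ := Real.log_rpow two_pos _
  have hlog4 : Real.log 4 = 2 * ℓ := by
    rw [show (4:ℝ) = 2^2 by norm_num, Real.log_pow]; push_cast; ring
  set x1 : ℝ := (D:ℝ) / (3 * σ) with hx1def
  have hx10 : 0 < x1 := by positivity
  -- main claim
  have core : (D:ℝ) * Real.log ((x + 3) / x) < σ * ℓ / (x + 1) := by
    have hlA : Real.log ((x + 3) / x) = Real.log (x + 3) - Real.log x :=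
      Real.log_div (by linarith) (ne_of_gt hx0)
    rcases le_or_gt x 1 with hxle1 | hxgt1
    · rcases le_or_gt x x1 with hxx1 | hxx1
      · -- range 1 : 4a ≤ x ≤ x1
        have hx1small : x1 ≤ 1 / 60 := by
          rw [hx1def, div_le_div_iff₀ (by positivity) (by norm_num)]
          nlinarith
        have hl3 : Real.log (x + 3) ≤ Real.log (19/6) :=
          Real.log_le_log (by linarith) (by nlinarith)
        have hlx : Real.log 4 + (-σ/(D:ℝ)) * ℓ ≤ Real.log x := by
          have h4a : Real.log (4 * a) = Real.log 4 + (-σ/(D:ℝ)) * ℓ := by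
            rw [Real.log_mul (by norm_num) (ne_of_gt haa), hloga]
          rw [← h4a]
          exact Real.log_le_log (by positivity) hx
        have hlog196 : 3 * Real.log (19/6) < 5 * ℓ := by
          have h := Real.log_lt_log (show (0:ℝ) < (19/6)^3 by positivity)
            (show ((19:ℝ)/6)^3 < 2^5 by norm_num)
          rwa [Real.log_pow, Real.log_pow, Nat.cast_ofNat, Nat.cast_ofNat] at h
        have hrhs : σ * ℓ - σ * ℓ * x ≤ σ * ℓ / (x + 1) := by
          rw [le_div_iff₀ (by linarith)]
          nlinarith [mul_pos hσ0 (by linarith : (0:ℝ) < ℓ), sq_nonneg x]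
        have hσlx : σ * ℓ * x ≤ (D:ℝ) * ℓ / 3 := by
          have h1 : σ * ℓ * x ≤ σ * ℓ * x1 := by
            apply mul_le_mul_of_nonneg_left hxx1
            positivity
          have h2 : σ * ℓ * x1 = (D:ℝ) * ℓ / 3 := by
            rw [hx1def]; field_simp
          exact le_of_le_of_eq h1 h2
        have hDcancel : (D:ℝ) * ((-σ/(D:ℝ)) * ℓ) = -(σ * ℓ) := by
          field_simp
        have hchain : (D:ℝ) * Real.log ((x + 3) / x) ≤
            (D:ℝ) * Real.log (19/6) - 2 * (D:ℝ) * ℓ + σ * ℓ := by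
          rw [hlA]
          have : Real.log (x+3) - Real.log x ≤ Real.log (19/6) - (2 * ℓ + (-σ/(D:ℝ)) * ℓ) := by
            rw [← hlog4]; linarith
          calc (D:ℝ) * (Real.log (x+3) - Real.log x)
              ≤ (D:ℝ) * (Real.log (19/6) - (2 * ℓ + (-σ/(D:ℝ)) * ℓ)) :=
                mul_le_mul_of_nonneg_left this (by positivity)
            _ = (D:ℝ) * Real.log (19/6) - 2 * (D:ℝ) * ℓ - (D:ℝ) * ((-σ/(D:ℝ)) * ℓ) := by ring
            _ = (D:ℝ) * Real.log (19/6) - 2 * (D:ℝ) * ℓ + σ * ℓ := by rw [hDcancel]; ring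
        have hfinal : (D:ℝ) * Real.log (19/6) - 2 * (D:ℝ) * ℓ + σ * ℓ
            < σ * ℓ - σ * ℓ * x := by
          nlinarith [hσlx, hlog196, hD1]
        linarith
      · -- range 2 : x1 < x ≤ 1
        have h4x1 : (4:ℝ) / x1 = 12 * σ / D := by
          rw [hx1def]; field_simp; ring
        have hl3 : Real.log (x + 3) ≤ Real.log 4 :=
          Real.log_le_log (by linarith) (by linarith)
        have hlx : Real.log x1 ≤ Real.log x := Real.log_le_log hx10 (le_of_lt hxx1)
        have hlog4x1 : Real.log (4 / x1) = Real.log 4 - Real.log x1 :=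
          Real.log_div (by norm_num) (ne_of_gt hx10)
        have hE3 := hS1 s (le_trans (le_max_left _ _) hs)
        rw [← hσdef, ← h4x1, hlog4x1] at hE3
        have hhalf : σ * ℓ / 2 ≤ σ * ℓ / (x + 1) := by
          apply div_le_div_of_nonneg_left (by positivity) (by linarith) (by linarith)
        have : (D:ℝ) * Real.log ((x+3)/x) ≤ (D:ℝ) * (Real.log 4 - Real.log x1) := by
          rw [hlA]
          apply mul_le_mul_of_nonneg_left (by linarith) (by positivity)
        calc (D:ℝ) * Real.log ((x+3)/x) ≤ (D:ℝ) * (Real.log 4 - Real.log x1) := this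
          _ < σ * ℓ / 2 := hE3
          _ ≤ σ * ℓ / (x + 1) := hhalf
    · -- range 3 : 1 < x
      have heq : (x + 3) / x = 1 + 3 / x := by field_simp
      have hlog3x : Real.log ((x + 3) / x) ≤ 3 / x := by
        rw [heq]
        have := Real.log_le_sub_one_of_pos (show (0:ℝ) < 1 + 3/x by positivity)
        linarith
      have hcmp : (D:ℝ) * (3 / x) < σ * ℓ / (x + 1) := by
        rw [show (D:ℝ) * (3 / x) = 3 * D / x by ring,
          div_lt_div_iff₀ (by linarith) (by linarith)]
        have hℓ0 : (0:ℝ) < ℓ := by linarith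
        have hstep : 20 * (D:ℝ) * ℓ ≤ σ * ℓ := mul_le_mul_of_nonneg_right hσ20 (le_of_lt hℓ0)
        have h6 : 6 * (D:ℝ) < σ * ℓ := by nlinarith
        nlinarith [mul_le_mul_of_nonneg_left (show x + 1 ≤ 2 * x from by linarith)
            (show (0:ℝ) ≤ 3 * (D:ℝ) from by positivity),
          mul_lt_mul_of_pos_right h6 hx0]
      calc (D:ℝ) * Real.log ((x + 3) / x) ≤ (D:ℝ) * (3 / x) :=
            mul_le_mul_of_nonneg_left hlog3x (by positivity)
        _ < σ * ℓ / (x + 1) := hcmp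
  -- convert to the product statement
  have hApos : 0 < (x + 3) / x := by positivity
  have hBpos : 0 < (x + 1) / (x + 2) := by positivity
  have hprodpos : 0 < ((x + 3) / x) ^ D * ((x + 1) / (x + 2)) ^ (s + 1) := by positivity
  rw [← Real.log_neg_iff hprodpos]
  rw [Real.log_mul (by positivity) (by positivity), Real.log_pow, Real.log_pow]
  have hBkey : σ * ℓ / (x + 1) ≤ σ * Real.log ((x + 2) / (x + 1)) := by
    have ht0 : (0:ℝ) ≤ 1/(x+1) := by positivity
    have ht1 : 1/(x+1) ≤ 1 := by
      rw [div_le_one (by linarith)]; linarith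
    have h := l1 (1/(x+1)) ht0 ht1
    have heq : 1 + 1/(x+1) = (x+2)/(x+1) := by field_simp; ring
    rw [heq] at h
    calc σ * ℓ / (x + 1) = σ * (1/(x+1) * ℓ) := by ring
      _ ≤ σ * Real.log ((x+2)/(x+1)) := mul_le_mul_of_nonneg_left h (le_of_lt hσ0)
  have hBlog : Real.log ((x + 1) / (x + 2)) = - Real.log ((x + 2) / (x + 1)) := by
    rw [Real.log_div (by linarith) (by linarith), Real.log_div (by linarith) (by linarith)]
    ring
  have hcast : ((s + 1 : ℕ) : ℝ) = σ := by push_cast; ring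
  rw [hcast, hBlog]
  nlinarith [core, hBkey]

lemma lemA_s18 (D : ℕ) (hD : 1 ≤ D) (s : ℕ) (x : ℝ) (hx : 0 < x)
    (hxa : x ≤ (2:ℝ) ^ (-((s : ℝ) + 1) / D)) :
    1 < ((x + 3) / x) ^ D * ((x + 1) / (x + 2)) ^ (s + 1) := by
  set a : ℝ := (2:ℝ) ^ (-((s : ℝ) + 1) / D) with ha
  have haa : 0 < a := Real.rpow_pos_of_pos two_pos _
  have hDr : (0:ℝ) < (D:ℝ) := by exact_mod_cast hD
  have haD : a ^ D = (2:ℝ) ^ (-((s:ℝ)+1)) := by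
    rw [ha, ← Real.rpow_natCast ((2:ℝ) ^ (-((s : ℝ) + 1) / D)) D, ← Real.rpow_mul (by norm_num)]
    congr 1
    field_simp
  have h1 : (3 / a) ^ D * ((1:ℝ) / 2) ^ (s + 1) = 3 ^ D := by
    have h2 : ((1:ℝ)/2) ^ (s+1) = (2:ℝ) ^ (-((s:ℝ)+1)) := by
      rw [one_div, inv_pow, ← Real.rpow_natCast (2:ℝ) (s+1), ← Real.rpow_neg (by norm_num)]
      push_cast
      ring_nf
    rw [div_pow, h2, ← haD]
    field_simp
  have hstep : (3 / a) ^ D * ((1:ℝ) / 2) ^ (s + 1) ≤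
      ((x + 3) / x) ^ D * ((x + 1) / (x + 2)) ^ (s + 1) := by
    apply mul_le_mul
    · apply pow_le_pow_left₀ (by positivity)
      rw [div_le_div_iff₀ haa hx]
      nlinarith
    · apply pow_le_pow_left₀ (by norm_num)
      rw [div_le_div_iff₀ (by norm_num) (by linarith)]
      linarith
    · positivity
    · positivity
  calc (1:ℝ) < 3 ^ D := one_lt_pow₀ (by norm_num) (by omega)
    _ = (3 / a) ^ D * ((1:ℝ) / 2) ^ (s + 1) := h1.symm
    _ ≤ _ := hstep


theorem stmt18 (D : ℕ) (hD : 1 ≤ D)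
    (f : ℝ → ℕ → ℝ)
    (hf : ∀ x s, f x s = ((x + 3) / x) ^ D * ((x + 1) / (x + 2)) ^ (s + 1)) :
    ∃ S : ℕ, ∀ s : ℕ, S ≤ s →
      f (4 * (2 : ℝ) ^ (-((s : ℝ) + 1) / D)) s < 1 ∧
      1 < f ((2 : ℝ) ^ (-((s : ℝ) + 1) / D)) s ∧
      ∀ x₀ : ℝ, 0 < x₀ → f x₀ s = 1 →
        (2 : ℝ) ^ (-((s : ℝ) + 1) / D) < x₀ ∧ x₀ < 4 * (2 : ℝ) ^ (-((s : ℝ) + 1) / D) := by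
  obtain ⟨S, hS⟩ := lemB D hD
  refine ⟨S, fun s hs => ?_⟩
  set a : ℝ := (2 : ℝ) ^ (-((s : ℝ) + 1) / D) with ha
  have haa : 0 < a := Real.rpow_pos_of_pos two_pos _
  have h1 : f (4 * a) s < 1 := by
    rw [hf]
    exact hS s hs _ (le_refl _)
  have h2 : 1 < f a s := by
    rw [hf]
    exact lemA_s18 D hD s a haa (le_refl _)
  refine ⟨h1, h2, fun x₀ hx₀ hfx => ?_⟩
  rw [hf] at hfx
  constructor
  · by_contra h
    push_neg at h
    have := lemA_s18 D hD s x₀ hx₀ h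
    rw [hfx] at this
    exact lt_irrefl _ this
  · by_contra h
    push_neg at h
    have := hS s hs x₀ h
    rw [hfx] at this
    exact lt_irrefl _ this
end
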